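/- Let d, s, δ ∈ ℕ with 2δ ≤ s, and l ∈ [d]. The number of edges e ∈ F_{d,s,δ} with level_d(e) = l equals (d+1) · binomial(d, l) · binomial(δ−1, l−1). -/

import Mathlib

/-- The binomial coefficient with an integer upper argument, defined to be `0`
when the upper argument is negative. -/
def zchoose (n : ℤ) (k : ℕ) : ℤ := if 0 ≤ n then (n.toNat.choose k : ℤ) else 0


open Finset

lemma card_sym' {α : Type*} [DecidableEq α] (s : Finset α) (n : ℕ) :
    (s.sym n).card = Nat.multichoose s.card n := by
  have h : s.sym n = (Finset.univ : Finset (Sym {x // x ∈ s} n)).image (Sym.map Subtype.val) := by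
    ext m
    simp only [Finset.mem_image, Finset.mem_univ, true_and, Finset.mem_sym_iff]
    constructor
    · intro h
      refine ⟨Sym.map (fun x => ⟨x.1, h x.1 x.2⟩) m.attach, ?_⟩
      rw [Sym.map_map]
      exact m.attach_map_coe
    · rintro ⟨m', rfl⟩ a ha
      rw [Sym.mem_map] at ha
      obtain ⟨b, _, rfl⟩ := ha
      exact b.2
  rw [h, Finset.card_image_of_injective _ (Sym.map_injective Subtype.val_injective _),
    Finset.card_univ, Sym.card_sym_eq_multichoose, Fintype.card_coe]

lemma card_piAntidiag' {ι : Type*} [DecidableEq ι] (s : Finset ι) (n : ℕ) :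
    (s.piAntidiag n).card = (s.card + n - 1).choose n := by
  rw [← Finset.map_sym_eq_piAntidiag, Finset.card_map, card_sym', Nat.multichoose_eq]
/-- number of functions with support exactly `S` and sum `m` -/
lemma card_exact_support {ι : Type*} [DecidableEq ι] (S : Finset ι) (m : ℕ)
    (hS : S.Nonempty) (hm : 1 ≤ m) :
    ((S.piAntidiag m).filter (fun w => ∀ j ∈ S, w j ≠ 0)).card = (m - 1).choose (S.card - 1) := by
  classical
  rcases le_or_gt S.card m with hcm | hcm
  · have himg : (S.piAntidiag m).filter (fun w => ∀ j ∈ S, w j ≠ 0) =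
        (S.piAntidiag (m - S.card)).image (fun w j => w j + if j ∈ S then 1 else 0) := by
      ext v
      simp only [mem_filter, mem_image, mem_piAntidiag, ne_eq]
      constructor
      · rintro ⟨⟨hsum, hsupp⟩, hpos⟩
        have hsum' : ∑ j ∈ S, v j = m := hsum
        refine ⟨fun j => v j - if j ∈ S then 1 else 0, ⟨?_, ?_⟩, ?_⟩
        · have h1 : ∀ j ∈ S, v j - (if j ∈ S then 1 else 0) = v j - 1 := by
            intro j hj; simp [hj]
          show ∑ j ∈ S, (v j - if j ∈ S then 1 else 0) = m - S.card
          rw [Finset.sum_congr rfl h1]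
          have h2 : ∑ j ∈ S, v j = ∑ j ∈ S, ((v j - 1) + 1) :=
            Finset.sum_congr rfl (fun j hj => by have := hpos j hj; omega)
          rw [h2, Finset.sum_add_distrib, Finset.sum_const, smul_eq_mul, mul_one] at hsum'
          omega
        · intro i hi
          by_contra hiS
          simp only [hiS, if_false, Nat.sub_zero] at hi
          exact hiS (hsupp i hi)
        · funext j
          by_cases hj : j ∈ S
          · have := hpos j hj
            simp only [hj, if_true]
            omega
          · simp only [hj, if_false]
            have : v j = 0 := by by_contra h; exact hj (hsupp j h)
            omega
      · rintro ⟨w, ⟨hsum, hsupp⟩, rfl⟩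
        have hsum' : ∑ j ∈ S, w j = m - S.card := hsum
        refine ⟨⟨?_, ?_⟩, ?_⟩
        · show ∑ j ∈ S, (w j + if j ∈ S then 1 else 0) = m
          rw [Finset.sum_add_distrib, Finset.sum_ite_mem, Finset.inter_self, Finset.sum_const,
            smul_eq_mul, mul_one]
          omega
        · intro i hi
          by_contra hiS
          simp only [hiS, if_false, add_zero] at hi
          exact hiS (hsupp i hi)
        · intro j hj
          simp [hj]
    rw [himg, Finset.card_image_of_injective, card_piAntidiag']
    · have h1 : S.card + (m - S.card) - 1 = m - 1 := by omega
      rw [h1]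
      have h2 : m - S.card = (m - 1) - (S.card - 1) := by
        have := hS.card_pos; omega
      rw [h2, Nat.choose_symm (by have := hS.card_pos; omega)]
    · intro w w' h
      funext j
      have := congrFun h j
      simp only at this
      omega
  · rw [Nat.choose_eq_zero_of_lt (by have := hS.card_pos; omega), Finset.card_eq_zero,
      Finset.eq_empty_iff_forall_notMem]
    intro v hv
    simp only [mem_filter, mem_piAntidiag, ne_eq] at hv
    obtain ⟨⟨hsum, _⟩, hpos⟩ := hv
    have hsum' : ∑ j ∈ S, v j = m := hsum
    have : S.card ≤ ∑ j ∈ S, v j := by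
      calc S.card = ∑ _j ∈ S, 1 := by simp
      _ ≤ ∑ j ∈ S, v j := Finset.sum_le_sum (fun j hj => by have := hpos j hj; omega)
    omega
lemma card_G (d s δ l : ℕ) (hδ1 : 1 ≤ δ) (hδ : 2 * δ ≤ s) (hl1 : 1 ≤ l) (hld : l ≤ d)
    (i : Fin (d + 1)) :
    ((Finset.piAntidiag (univ : Finset (Fin (d + 1))) s).filter
        (fun v => (∀ j, v j ≤ s - δ) ∧ v i = s - δ ∧
          (univ.filter fun j => 0 < v j).card = l + 1)).card =
      d.choose l * (δ - 1).choose (l - 1) := by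
  have hsδ1 : 1 ≤ s - δ := by omega
  have hδsδ : δ ≤ s - δ := by omega
  set ψ : (Fin (d + 1) → ℕ) → (Fin (d + 1) → ℕ) :=
    fun w j => if j = i then s - δ else w j with hψ
  have key : (Finset.piAntidiag (univ : Finset (Fin (d + 1))) s).filter
        (fun v => (∀ j, v j ≤ s - δ) ∧ v i = s - δ ∧
          (univ.filter fun j => 0 < v j).card = l + 1) =
      ((univ.erase i).powersetCard l).biUnion
        (fun S => ((S.piAntidiag δ).filter (fun w => ∀ j ∈ S, w j ≠ 0)).image ψ) := by
    ext v
    simp only [mem_filter, mem_biUnion, mem_image, mem_piAntidiag, mem_powersetCard, ne_eq]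
    constructor
    · rintro ⟨⟨hsum, -⟩, hle, hvi, hcard⟩
      have hsum' : ∑ j, v j = s := hsum
      have hifilt : i ∈ univ.filter fun j => 0 < v j := by
        simp only [mem_filter, mem_univ, true_and]; omega
      set S := (univ.filter fun j => 0 < v j).erase i with hSdef
      have hiS : i ∉ S := notMem_erase _ _
      have hScard : S.card = l := by
        rw [hSdef, card_erase_of_mem hifilt, hcard]; omega
      have hSsub : S ⊆ univ.erase i := erase_subset_erase _ (filter_subset _ _)
      have herasesum : ∑ j ∈ univ.erase i, v j = δ := by
        have := Finset.add_sum_erase univ v (mem_univ i)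
        omega
      have hSsum : ∑ j ∈ S, v j = δ := by
        rw [← herasesum]
        apply Finset.sum_subset hSsub
        intro x hx hxS
        by_contra h
        exact hxS (by
          rw [hSdef, mem_erase]
          exact ⟨(mem_erase.1 hx).1, by simp only [mem_filter, mem_univ, true_and]; omega⟩)
      refine ⟨S, ⟨hSsub, hScard⟩, Function.update v i 0, ⟨⟨?_, ?_⟩, ?_⟩, ?_⟩
      · rw [← hSsum]
        apply Finset.sum_congr rfl
        intro j hj
        rw [Function.update_of_ne (by rintro rfl; exact hiS hj)]
      · intro j hj
        by_cases hji : j = i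
        · subst hji; simp [Function.update_self] at hj
        · rw [Function.update_of_ne hji] at hj
          rw [hSdef, mem_erase]
          exact ⟨hji, by simp only [mem_filter, mem_univ, true_and]; omega⟩
      · intro j hj
        rw [Function.update_of_ne (by rintro rfl; exact hiS hj)]
        have := mem_erase.1 (hSsub hj)
        have := (mem_filter.1 (mem_of_mem_erase hj)).2
        omega
      · funext j
        by_cases hji : j = i
        · subst hji; simp [hψ, hvi]
        · simp [hψ, hji, Function.update_of_ne hji]
    · rintro ⟨S, ⟨hSsub, hScard⟩, w, ⟨⟨hsum, hsupp⟩, hpos⟩, rfl⟩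
      have hiS : i ∉ S := fun h => (mem_erase.1 (hSsub h)).1 rfl
      have hwi : w i = 0 := by by_contra h; exact hiS (hsupp i h)
      have hsum' : ∑ j ∈ S, w j = δ := hsum
      have herasesum : ∑ j ∈ univ.erase i, w j = δ := by
        rw [← hsum']
        symm
        apply Finset.sum_subset hSsub
        intro x hx hxS
        by_contra h
        exact hxS (hsupp x h)
      have hwle : ∀ j, w j ≤ δ := by
        intro j
        by_cases hj : j ∈ S
        · rw [← hsum']
          exact Finset.single_le_sum (fun k _ => Nat.zero_le _) hj
        · have : w j = 0 := by by_contra h; exact hj (hsupp j h)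
          omega
      have hψsupp : (univ.filter fun j => 0 < ψ w j) = insert i S := by
        ext j
        simp only [mem_filter, mem_univ, true_and, mem_insert, hψ]
        by_cases hji : j = i
        · subst hji; simp; omega
        · simp only [hji, if_false, false_or]
          constructor
          · intro h; exact hsupp j (by omega)
          · intro h; have := hpos j h; omega
      refine ⟨⟨?_, fun _ _ => mem_univ _⟩, ?_, ?_, ?_⟩
      · show ∑ j, ψ w j = s
        have h1 : ∑ j ∈ univ.erase i, ψ w j = δ := by
          rw [← herasesum]
          apply Finset.sum_congr rfl
          intro j hj
          simp [hψ, (mem_erase.1 hj).1]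
        have h2 := Finset.add_sum_erase univ (ψ w) (mem_univ i)
        have h3 : ψ w i = s - δ := by simp [hψ]
        omega
      · intro j
        by_cases hji : j = i
        · subst hji; simp [hψ]
        · simp only [hψ, hji, if_false]
          exact le_trans (hwle j) hδsδ
      · simp [hψ]
      · rw [hψsupp, card_insert_of_notMem hiS, hScard]
  rw [key, Finset.card_biUnion]
  · have hconst : ∀ S ∈ (univ.erase i).powersetCard l,
        (((S.piAntidiag δ).filter (fun w => ∀ j ∈ S, w j ≠ 0)).image ψ).card =
          (δ - 1).choose (l - 1) := by
      intro S hS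
      obtain ⟨hSsub, hScard⟩ := mem_powersetCard.1 hS
      have hSne : S.Nonempty := by
        rw [← card_pos, hScard]; omega
      rw [Finset.card_image_of_injOn]
      · rw [← hScard]
        convert card_exact_support S δ hSne hδ1 using 2
        · ext w; simp
      · intro w hw w' hw' h
        simp only [coe_filter, mem_piAntidiag, Set.mem_setOf_eq] at hw hw'
        have hwi : w i = 0 := by
          by_contra hc
          exact (mem_erase.1 (hSsub (hw.1.2 i hc))).1 rfl
        have hwi' : w' i = 0 := by
          by_contra hc
          exact (mem_erase.1 (hSsub (hw'.1.2 i hc))).1 rfl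
        funext j
        by_cases hji : j = i
        · subst hji; rw [hwi, hwi']
        · have := congrFun h j
          simpa [hψ, hji] using this
    rw [Finset.sum_congr rfl hconst, Finset.sum_const, smul_eq_mul, card_powersetCard,
      card_erase_of_mem (mem_univ i), card_univ, Fintype.card_fin]
    simp
  · intro S hS T hT hST
    simp only [Finset.disjoint_left]
    intro v hv hv'
    simp only [mem_image, mem_filter, mem_piAntidiag, ne_eq] at hv hv'
    obtain ⟨w, ⟨⟨-, hsupp⟩, hpos⟩, rfl⟩ := hv
    obtain ⟨w', ⟨⟨-, hsupp'⟩, hpos'⟩, hww⟩ := hv'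
    obtain ⟨hSsub, -⟩ := mem_powersetCard.1 hS
    obtain ⟨hTsub, -⟩ := mem_powersetCard.1 hT
    apply hST
    have hw : ∀ j, j ≠ i → w j = w' j := by
      intro j hji
      have := congrFun hww j
      simpa [hψ, hji] using this.symm
    ext j
    by_cases hji : j = i
    · subst hji
      constructor
      · intro h; exact absurd (hSsub h) (by simp)
      · intro h; exact absurd (hTsub h) (by simp)
    · constructor
      · intro hj
        have h1 := hpos j hj
        rw [hw j hji] at h1
        exact hsupp' j h1
      · intro hj
        have h1 := hpos' j hj
        rw [← hw j hji] at h1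
        exact hsupp j h1

/-- Let `2δ ≤ s` and `1 ≤ l ≤ d`. The number of edges `e ∈ F_{d,s,δ}` with
`level_d(e) = l` equals `(d+1) · C(d, l) · C(δ−1, l−1)`. Such edges are pairs
`{r_i, v}` with `i ∈ [d+1]`, `v ∈ △_{d,s}^ℤ`, `max_j v_j ≤ s−δ` and `v_i = s−δ`,
the level of the edge being `level_d(v)`, i.e. `|support_d(v)| − 1`. -/
theorem simplified_simplex_edge_count_F (d s δ l : ℕ) (hδ : 2 * δ ≤ s)
    (hl1 : 1 ≤ l) (hld : l ≤ d) :
    (Nat.card {p : Fin (d + 1) × (Fin (d + 1) → ℕ) //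
        (∑ j, p.2 j = s) ∧ (∀ j, p.2 j ≤ s - δ) ∧ p.2 p.1 = s - δ ∧
        (Finset.univ.filter fun j => 0 < p.2 j).card = l + 1} : ℤ) =
      (d + 1) * (d.choose l : ℤ) * zchoose ((δ : ℤ) - 1) (l - 1) := by
  rcases Nat.eq_zero_or_pos δ with rfl | hδ1
  · have : IsEmpty {p : Fin (d + 1) × (Fin (d + 1) → ℕ) //
        (∑ j, p.2 j = s) ∧ (∀ j, p.2 j ≤ s - 0) ∧ p.2 p.1 = s - 0 ∧
        (Finset.univ.filter fun j => 0 < p.2 j).card = l + 1} := by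
      constructor
      rintro ⟨⟨i, v⟩, hsum, hle, hvi, hcard⟩
      simp only at hsum hle hvi hcard
      have hsub : (Finset.univ.filter fun j => 0 < v j) ⊆ {i} := by
        intro j hj
        simp only [Finset.mem_filter, Finset.mem_univ, true_and] at hj
        simp only [Finset.mem_singleton]
        by_contra hji
        have h1 := Finset.add_sum_erase Finset.univ v (Finset.mem_univ i)
        have h2 : v j ≤ ∑ k ∈ Finset.univ.erase i, v k :=
          Finset.single_le_sum (fun k _ => Nat.zero_le _)
            (Finset.mem_erase.2 ⟨hji, Finset.mem_univ j⟩)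
        omega
      have := Finset.card_le_card hsub
      rw [hcard, Finset.card_singleton] at this
      omega
    rw [Nat.card_of_isEmpty]
    norm_num [zchoose]
  · classical
    set F : Finset (Fin (d + 1) × (Fin (d + 1) → ℕ)) :=
      (Finset.univ ×ˢ Finset.piAntidiag Finset.univ s).filter
        (fun p => (∀ j, p.2 j ≤ s - δ) ∧ p.2 p.1 = s - δ ∧
          (Finset.univ.filter fun j => 0 < p.2 j).card = l + 1) with hF
    have hmem : ∀ p : Fin (d + 1) × (Fin (d + 1) → ℕ),
        ((∑ j, p.2 j = s) ∧ (∀ j, p.2 j ≤ s - δ) ∧ p.2 p.1 = s - δ ∧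
          (Finset.univ.filter fun j => 0 < p.2 j).card = l + 1) ↔ p ∈ F := by
      intro p
      simp only [hF, Finset.mem_filter, Finset.mem_product, Finset.mem_univ, true_and,
        Finset.mem_piAntidiag, ne_eq]
      tauto
    have hcardF : Nat.card {p : Fin (d + 1) × (Fin (d + 1) → ℕ) //
        (∑ j, p.2 j = s) ∧ (∀ j, p.2 j ≤ s - δ) ∧ p.2 p.1 = s - δ ∧
        (Finset.univ.filter fun j => 0 < p.2 j).card = l + 1} = F.card := by
      rw [Nat.card_congr (Equiv.subtypeEquivRight hmem), Nat.card_eq_fintype_card,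
        Fintype.card_coe]
    rw [hcardF]
    have hfib : F.card = ∑ i : Fin (d + 1), (F.filter fun p => p.1 = i).card :=
      Finset.card_eq_sum_card_fiberwise (fun p _ => Finset.mem_univ p.1)
    have hfibi : ∀ i : Fin (d + 1), (F.filter fun p => p.1 = i).card =
        d.choose l * (δ - 1).choose (l - 1) := by
      intro i
      have himg : F.filter (fun p => p.1 = i) =
          ((Finset.piAntidiag (Finset.univ : Finset (Fin (d + 1))) s).filter
            (fun v => (∀ j, v j ≤ s - δ) ∧ v i = s - δ ∧
              (Finset.univ.filter fun j => 0 < v j).card = l + 1)).image (fun v => (i, v)) := by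
        ext p
        obtain ⟨j, v⟩ := p
        simp only [hF, Finset.mem_filter, Finset.mem_image, Finset.mem_product, Finset.mem_univ,
          true_and, Prod.mk.injEq]
        constructor
        · rintro ⟨⟨h1, h2, h3, h4⟩, rfl⟩
          exact ⟨v, ⟨h1, h2, h3, h4⟩, rfl, rfl⟩
        · rintro ⟨w, ⟨h1, h2, h3, h4⟩, rfl, rfl⟩
          exact ⟨⟨h1, h2, h3, h4⟩, rfl⟩
      rw [himg, Finset.card_image_of_injective _ (fun a b h => (Prod.mk.injEq .. ▸ h).2 ▸ rfl)]
      exact card_G d s δ l hδ1 hδ hl1 hld i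
    rw [hfib, Finset.sum_congr rfl (fun i _ => hfibi i), Finset.sum_const, Finset.card_univ,
      Fintype.card_fin, smul_eq_mul]
    have hz : zchoose ((δ : ℤ) - 1) (l - 1) = ((δ - 1).choose (l - 1) : ℤ) := by
      have h1 : (δ : ℤ) - 1 = ((δ - 1 : ℕ) : ℤ) := by omega
      rw [h1, zchoose, if_pos (Int.natCast_nonneg _), Int.toNat_natCast]
    rw [hz]
    push_cast
    ring
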